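/- Let 0 < c < b = √(q/θ_ig) and set x₀ = (1/c)·ln(q/(q − c²·θ_ig)). Then x₀ > 0, the function θ_c is strictly increasing on (0, x₀) and strictly decreasing on (x₀, +∞), θ_c'(x₀) = 0, and its maximum value is θ_c(x₀) = (q/c)·x₀. -/

import Mathlib

open Set Filter

/-!
Differentiating gives `θ_c'(x) = (c θ_ig − q/c) e^{cx} + q/c`, and with `x₀ = thetaPeak q θig c`
this factors as `θ_c'(x) = (q/c)(1 − e^{c(x − x₀)})`. So the sign of `θ_c'` is that of `x₀ − x`,
which gives the monotonicity and the global maximum at `x₀`. The value there follows from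
`e^{c x₀} = q/(q − c² θ_ig)`, which makes the exponential terms of `θ_c(x₀)` cancel.
-/

noncomputable def theta (q θig c x : ℝ) : ℝ :=
  θig * Real.exp (c * x) + (q / c) * x + (q / c ^ 2) * (1 - Real.exp (c * x))

noncomputable def thetaPeak (q θig c : ℝ) : ℝ :=
  (1 / c) * Real.log (q / (q - c ^ 2 * θig))

variable {q θig c : ℝ}

lemma sq_mul_lt_of_lt_sqrt_div (hc : 0 ≤ c) (hθ : 0 < θig) (h : c < Real.sqrt (q / θig)) :
    c ^ 2 * θig < q :=
  (lt_div_iff₀ hθ).mp ((Real.lt_sqrt hc).mp h)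

lemma hasDerivAt_theta (hc : c ≠ 0) (x : ℝ) :
    HasDerivAt (theta q θig c) ((c * θig - q / c) * Real.exp (c * x) + q / c) x := by
  have he : HasDerivAt (fun x : ℝ => Real.exp (c * x)) (Real.exp (c * x) * c) x := by
    simpa using ((hasDerivAt_id x).const_mul c).exp
  refine (((he.const_mul θig).add ((hasDerivAt_id x).const_mul (q / c))).add
    (((hasDerivAt_const x (1 : ℝ)).sub he).const_mul (q / c ^ 2))).congr_deriv ?_
  field_simp
  ring

lemma exp_mul_thetaPeak (hc : c ≠ 0) (hq : 0 < q) (hlt : c ^ 2 * θig < q) :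
    Real.exp (c * thetaPeak q θig c) = q / (q - c ^ 2 * θig) := by
  have hE : 0 < q / (q - c ^ 2 * θig) := div_pos hq (sub_pos.mpr hlt)
  rw [thetaPeak, ← mul_assoc, mul_one_div_cancel hc, one_mul, Real.exp_log hE]

lemma hasDerivAt_theta_eq_mul_one_sub_exp (hc : c ≠ 0) (hq : 0 < q) (hlt : c ^ 2 * θig < q)
    (x : ℝ) :
    HasDerivAt (theta q θig c) (q / c * (1 - Real.exp (c * (x - thetaPeak q θig c)))) x := by
  convert hasDerivAt_theta hc x using 1
  rw [mul_sub c, Real.exp_sub, exp_mul_thetaPeak hc hq hlt]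
  field_simp
  ring

lemma theta_thetaPeak (hc : c ≠ 0) (hq : 0 < q) (hlt : c ^ 2 * θig < q) :
    theta q θig c (thetaPeak q θig c) = q / c * thetaPeak q θig c := by
  have hD : q - θig * c ^ 2 ≠ 0 := by rw [mul_comm]; exact (sub_pos.mpr hlt).ne'
  have hcancel : θig * (q / (q - c ^ 2 * θig)) + q / c ^ 2 * (1 - q / (q - c ^ 2 * θig)) = 0 := by
    field_simp
    ring
  rw [theta, exp_mul_thetaPeak hc hq hlt]
  linear_combination hcancel

lemma thetaPeak_pos (hc : 0 < c) (hθ : 0 < θig) (hlt : c ^ 2 * θig < q) :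
    0 < thetaPeak q θig c := by
  have hD : 0 < q - c ^ 2 * θig := sub_pos.mpr hlt
  have hE : 1 < q / (q - c ^ 2 * θig) :=
    (one_lt_div hD).mpr (sub_lt_self _ (by positivity))
  exact mul_pos (one_div_pos.mpr hc) (Real.log_pos hE)

lemma strictMonoOn_theta_Iic (hc : 0 < c) (hq : 0 < q) (hlt : c ^ 2 * θig < q) :
    StrictMonoOn (theta q θig c) (Iic (thetaPeak q θig c)) := by
  have hd := hasDerivAt_theta_eq_mul_one_sub_exp hc.ne' hq hlt (θig := θig)
  refine strictMonoOn_of_hasDerivWithinAt_pos (convex_Iic _)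
    (fun x _ ↦ (hd x).continuousAt.continuousWithinAt) (fun x _ ↦ (hd x).hasDerivWithinAt) ?_
  intro x hx
  rw [interior_Iic] at hx
  have : Real.exp (c * (x - thetaPeak q θig c)) < 1 :=
    Real.exp_lt_one_iff.mpr (mul_neg_of_pos_of_neg hc (sub_neg.mpr hx))
  exact mul_pos (div_pos hq hc) (sub_pos.mpr this)

lemma strictAntiOn_theta_Ici (hc : 0 < c) (hq : 0 < q) (hlt : c ^ 2 * θig < q) :
    StrictAntiOn (theta q θig c) (Ici (thetaPeak q θig c)) := by
  have hd := hasDerivAt_theta_eq_mul_one_sub_exp hc.ne' hq hlt (θig := θig)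
  refine strictAntiOn_of_hasDerivWithinAt_neg (convex_Ici _)
    (fun x _ ↦ (hd x).continuousAt.continuousWithinAt) (fun x _ ↦ (hd x).hasDerivWithinAt) ?_
  intro x hx
  rw [interior_Ici] at hx
  have : 1 < Real.exp (c * (x - thetaPeak q θig c)) :=
    Real.one_lt_exp_iff.mpr (mul_pos hc (sub_pos.mpr hx))
  exact mul_neg_of_pos_of_neg (div_pos hq hc) (sub_neg.mpr this)

lemma isMaxOn_theta_thetaPeak (hc : 0 < c) (hq : 0 < q) (hlt : c ^ 2 * θig < q) :
    IsMaxOn (theta q θig c) univ (thetaPeak q θig c) :=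
  isMaxOn_univ_of_mono_anti (strictMonoOn_theta_Iic hc hq hlt).monotoneOn
    (strictAntiOn_theta_Ici hc hq hlt).antitoneOn

/-- For `0 < c < b = √(q/θ_ig)` and `x₀ = (1/c)·ln(q/(q − c²θ_ig))`, one has `x₀ > 0`,
`θ_c` is strictly increasing on `(0, x₀)` and strictly decreasing on `(x₀, ∞)`,
`θ_c'(x₀) = 0`, and the maximum value is `θ_c(x₀) = (q/c)x₀`. -/
theorem stmt4 (q θig : ℝ) (hq : 0 < q) (h1 : 0 < θig)
    (c : ℝ) (hc0 : 0 < c) (hcb : c < Real.sqrt (q / θig))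
    (x₀ : ℝ) (hx₀ : x₀ = (1 / c) * Real.log (q / (q - c ^ 2 * θig))) :
    0 < x₀ ∧
    StrictMonoOn (theta q θig c) (Ioo 0 x₀) ∧
    StrictAntiOn (theta q θig c) (Ioi x₀) ∧
    deriv (theta q θig c) x₀ = 0 ∧
    theta q θig c x₀ = (q / c) * x₀ ∧
    (∀ x : ℝ, 0 ≤ x → theta q θig c x ≤ theta q θig c x₀) := by
  obtain rfl : x₀ = thetaPeak q θig c := hx₀
  have hlt := sq_mul_lt_of_lt_sqrt_div hc0.le h1 hcb
  refine ⟨thetaPeak_pos hc0 h1 hlt,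
    (strictMonoOn_theta_Iic hc0 hq hlt).mono (Ioo_subset_Iio_self.trans Iio_subset_Iic_self),
    (strictAntiOn_theta_Ici hc0 hq hlt).mono Ioi_subset_Ici_self, ?_,
    theta_thetaPeak hc0.ne' hq hlt, fun x _ ↦ isMaxOn_theta_thetaPeak hc0 hq hlt (mem_univ x)⟩
  rw [(hasDerivAt_theta_eq_mul_one_sub_exp hc0.ne' hq hlt _).deriv]
  simp
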